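/- arXiv:2602.05197 — 2 statements merged into one kernel-verified Lean document; each statement's English description precedes it below -/
import Mathlib

section
/- Let n be a natural number and let D : Fin (n+1) → ℤ be a function with 1 ≤ D p ≤ n for all p (depths of Du Bois complexes). Define lcdef = n - min over p of (D p + p), and define pX = the least p such that D p + p = n - lcdef. Assume the 'Theorem A' property: for every integer k, (lcdef ≤ n - k) ↔ (D p + p ≥ k for all p ≤ ⌈(k-3)/2⌉). Then lcdef ≤ n - 2·pX - 1. -/
/-- arithmetic form of `lcdef(X) ≤ n - 2·p(X) - 1`.  Here `M` is the
minimum of `D p + p`, so `lcdef = n - M`, and `pX` is the least index attaining the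
minimum.  Assuming the 'Theorem A' equivalence, `n - M ≤ n - 2·pX - 1`. -/
theorem lcdef_le_n_sub_two_pX (n : ℕ) (D : Fin (n + 1) → ℤ)
    (hD1 : ∀ p, 1 ≤ D p) (hDn : ∀ p, D p ≤ (n : ℤ))
    (M : ℤ) (hM : IsLeast (Set.range fun p : Fin (n + 1) => D p + (p : ℤ)) M)
    (pX : Fin (n + 1)) (hpX : D pX + (pX : ℤ) = M)
    (hpXmin : ∀ q : Fin (n + 1), D q + (q : ℤ) = M → pX ≤ q)
    (thmA : ∀ k : ℤ,
      ((n : ℤ) - M ≤ (n : ℤ) - k ↔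
        ∀ p : Fin (n + 1), (p : ℤ) ≤ ⌈(((k : ℚ)) - 3) / 2⌉ → k ≤ D p + (p : ℤ))) :
    (n : ℤ) - M ≤ (n : ℤ) - 2 * (pX : ℤ) - 1 := by
  have hfalse : ¬ ((n : ℤ) - M ≤ (n : ℤ) - (M + 1)) := by omega
  have h := (thmA (M + 1)).not.mp hfalse
  push_neg at h
  obtain ⟨p, hple, hplt⟩ := h
  have hMp : M ≤ D p + (p : ℤ) := hM.2 ⟨p, rfl⟩
  have heq : D p + (p : ℤ) = M := by omega
  have hpXp : (pX : ℤ) ≤ (p : ℤ) := by exact_mod_cast hpXmin p heq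
  -- ceiling bound: 2 * ⌈(M+1-3)/2⌉ ≤ M - 1
  set c : ℤ := ⌈(((M + 1 : ℤ) : ℚ) - 3) / 2⌉ with hc
  have hclt : (c : ℚ) < (((M + 1 : ℤ) : ℚ) - 3) / 2 + 1 := Int.ceil_lt_add_one _
  have h2c : (2 * c : ℚ) < (M : ℚ) := by push_cast at hclt ⊢; linarith
  have h2c' : 2 * c < M := by exact_mod_cast h2c
  omega
end

section
/- Let n, m be integers with m ≥ 0, and D : Fin (n+1) → ℤ with 1 ≤ D p ≤ n. Set lcdef = n - min_p (D p + p). Assume D p + p ≥ n for all p ≤ m - 1 and D m ≤ m + 3. Assume also the bound lcdef ≤ n - 2·pX - 1 where pX = min { p : D p + p = n - lcdef }. Then lcdef = max(0, n - D m - m). -/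
/-- arithmetic form of Theorem D: if `D p + p ≥ n` for `p ≤ m - 1` and
`D m ≤ m + 3`, then (using the bound `lcdef ≤ n - 2·pX - 1`)
`lcdef = max(0, n - D m - m)`, where `lcdef = n - M` and `M = min_p (D p + p)`. -/
theorem lcdef_eq_max (n : ℕ) (D : Fin (n + 1) → ℤ)
    (hD1 : ∀ p, 1 ≤ D p) (hDn : ∀ p, D p ≤ (n : ℤ))
    (M : ℤ) (hM : IsLeast (Set.range fun p : Fin (n + 1) => D p + (p : ℤ)) M)
    (m : Fin (n + 1))
    (h1 : ∀ p : Fin (n + 1), (p : ℤ) ≤ (m : ℤ) - 1 → (n : ℤ) ≤ D p + (p : ℤ))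
    (h2 : D m ≤ (m : ℤ) + 3)
    (pX : Fin (n + 1)) (hpX : D pX + (pX : ℤ) = M)
    (hpXmin : ∀ q : Fin (n + 1), D q + (q : ℤ) = M → pX ≤ q)
    (hbound : (n : ℤ) - M ≤ (n : ℤ) - 2 * (pX : ℤ) - 1) :
    (n : ℤ) - M = max 0 ((n : ℤ) - D m - (m : ℤ)) := by
  have hMm : M ≤ D m + (m : ℤ) := hM.2 ⟨m, rfl⟩
  have hMn : M ≤ (n : ℤ) := by
    have h0 : M ≤ D 0 + ((0 : Fin (n + 1)) : ℤ) := hM.2 ⟨0, rfl⟩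
    have h0' : ((0 : Fin (n + 1)) : ℤ) = 0 := by simp
    have := hDn 0
    omega
  have key : D m + (m : ℤ) ≤ M ∨ (n : ℤ) ≤ M := by
    by_contra hc
    push_neg at hc
    obtain ⟨hc1, hc2⟩ := hc
    have hpm : (m : ℤ) ≤ (pX : ℤ) := by
      by_contra hlt
      push_neg at hlt
      have := h1 pX (by omega)
      omega
    have hne : (pX : ℤ) ≠ (m : ℤ) := by
      intro he
      have hpe : pX = m := Fin.ext (by exact_mod_cast he)
      rw [hpe] at hpX
      omega
    omega
  rcases key with hk | hk
  · rw [max_eq_right (by omega : (0:ℤ) ≤ (n : ℤ) - D m - (m : ℤ))]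
    omega
  · rw [max_eq_left (by omega : (n : ℤ) - D m - (m : ℤ) ≤ 0)]
    omega
end
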